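/- arXiv:1705.05509 — 3 statements merged into one kernel-verified Lean document; each statement's English description precedes it below -/
import Mathlib

section
/- Let H ≥ 2 and let a_0, a_1, b_0, b_1 be sequences of odd length n over Z_H, and let g_0, g_1, f_0, f_1 ∈ Z_n. Let u = I(L^{g_0}(a_0), L^{g_1}(a_1)) and v = I(L^{f_0}(b_0), L^{f_1}(b_1)) be the corresponding interleaved sequences of length 2n. Then for every even shift τ = 2τ_1 with 0 ≤ τ_1 < n, the cross-correlation satisfies R_{u,v}(τ) = R_{a_0,b_0}(τ_1 + f_0 − g_0) + R_{a_1,b_1}(τ_1 + f_1 − g_1), where the shift arguments are taken modulo n. -/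
/-- Cross-correlation of two sequences of length `N` over `ℤ_H`, with `ξ = exp(2πi/H)`. -/
noncomputable def crossCorr (H N : ℕ) (s t : ZMod N → ZMod H) (τ : ZMod N) : ℂ :=
  ∑ i ∈ Finset.range N,
    Complex.exp (2 * (Real.pi : ℂ) * Complex.I / (H : ℂ)) ^ ((s (i : ZMod N) - t ((i : ZMod N) + τ)).val)

/-- Cross-correlation of two binary sequences of length `N` (an integer). -/
def binCorr (N : ℕ) (s t : ZMod N → ZMod 2) (τ : ZMod N) : ℤ :=
  ∑ i ∈ Finset.range N, (-1 : ℤ) ^ ((s (i : ZMod N) + t ((i : ZMod N) + τ)).val)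

/-- Cross-correlation of two quaternary sequences of length `N`, with `ξ = √-1`. -/
noncomputable def quadCorr (N : ℕ) (s t : ZMod N → ZMod 4) (τ : ZMod N) : ℂ :=
  ∑ i ∈ Finset.range N, Complex.I ^ ((s (i : ZMod N) - t ((i : ZMod N) + τ)).val)

/-- Interleaving `u = I(a, b)`: `u(2i) = a(i)`, `u(2i+1) = b(i)`. -/
def interleaveSeq {H : ℕ} (n : ℕ) (a b : ZMod n → ZMod H) : ZMod (2 * n) → ZMod H :=
  fun k => if k.val % 2 = 0 then a ((k.val / 2 : ℕ) : ZMod n) else b ((k.val / 2 : ℕ) : ZMod n)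

/-- The inverse Gray mapping `φ⁻¹ : ℤ₂ × ℤ₂ → ℤ₄`. -/
def grayInv (a b : ZMod 2) : ZMod 4 :=
  if a = 0 then (if b = 0 then 0 else 1) else (if b = 0 then 3 else 2)

/-- Construction I: the quaternary sequence of length `2n` built from
`a₀, a₁, a₂, a₃` and bits `e₀, e₁, e₂`. -/
def constructionI (n : ℕ) (a0 a1 a2 a3 : ZMod n → ZMod 2)
    (e0 e1 e2 : ZMod 2) : ZMod (2 * n) → ZMod 4 :=
  let lam : ZMod n := (((n + 1) / 2 : ℕ) : ZMod n)
  let c := interleaveSeq n a0 (fun i => e0 + a1 (i + lam))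
  let d := interleaveSeq n (fun i => e1 + a2 i) (fun i => e2 + a3 (i + lam))
  fun i => grayInv (c i) (d i)


/-! An even shift `2τ` maps even positions of `ℤ/2n` to even ones and odd to odd, so splitting the
sum defining `R_{u,v}(2τ)` by parity gives `R_{a₀',b₀'}(τ) + R_{a₁',b₁'}(τ)` for the shifted
sequences `aₖ' = L^{gₖ}(aₖ)`, `bₖ' = L^{fₖ}(bₖ)`. Reindexing `i ↦ i + gₖ` over `ℤ/n` turns these
into `R_{aₖ,bₖ}(τ + fₖ - gₖ)`. -/

theorem sum_range_two_mul {M : Type*} [AddCommMonoid M] (n : ℕ) (f : ℕ → M) :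
    ∑ i ∈ Finset.range (2 * n), f i =
      ∑ i ∈ Finset.range n, (f (2 * i) + f (2 * i + 1)) := by
  induction n with
  | zero => simp
  | succ m ih =>
    rw [Nat.mul_succ, Finset.sum_range_succ, Finset.sum_range_succ, Finset.sum_range_succ, ← ih,
      add_assoc]

theorem sum_range_natCast_eq_sum_zmod {M : Type*} [AddCommMonoid M] (n : ℕ) [NeZero n]
    (F : ZMod n → M) : ∑ i ∈ Finset.range n, F i = ∑ x : ZMod n, F x :=
  Finset.sum_nbij' (↑) ZMod.val (fun _ _ ↦ Finset.mem_univ _)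
    (fun x _ ↦ Finset.mem_range.mpr x.val_lt)
    (fun _ hi ↦ ZMod.val_natCast_of_lt (Finset.mem_range.mp hi))
    (fun x _ ↦ ZMod.natCast_zmod_val x) (fun _ _ ↦ rfl)

theorem crossCorr_eq_sum_zmod (H N : ℕ) [NeZero N] (s t : ZMod N → ZMod H) (τ : ZMod N) :
    crossCorr H N s t τ =
      ∑ i : ZMod N, Complex.exp (2 * Real.pi * Complex.I / H) ^ (s i - t (i + τ)).val :=
  sum_range_natCast_eq_sum_zmod N fun i ↦
    Complex.exp (2 * Real.pi * Complex.I / H) ^ (s i - t (i + τ)).val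

theorem crossCorr_comp_add (H n : ℕ) (a b : ZMod n → ZMod H) (g f τ : ZMod n) :
    crossCorr H n (fun i ↦ a (i + g)) (fun i ↦ b (i + f)) τ =
      crossCorr H n a b (τ + f - g) := by
  rcases eq_or_ne n 0 with rfl | hn
  · simp [crossCorr]
  have : NeZero n := ⟨hn⟩
  rw [crossCorr_eq_sum_zmod, crossCorr_eq_sum_zmod]
  refine Fintype.sum_equiv (Equiv.addRight g) _ _ fun i ↦ ?_
  rw [Equiv.coe_addRight, show i + g + (τ + f - g) = i + τ + f by abel]

section interleave

variable {H : ℕ} (n : ℕ) (a b : ZMod n → ZMod H) (i : ℕ)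

theorem interleaveSeq_natCast_two_mul :
    interleaveSeq n a b ((2 * i : ℕ) : ZMod (2 * n)) = a i := by
  have hmod : 2 * i % (2 * n) = 2 * (i % n) := Nat.mul_mod_mul_left 2 i n
  simp only [interleaveSeq]
  rw [ZMod.val_natCast, hmod, Nat.mul_mod_right, if_pos rfl, Nat.mul_div_cancel_left _ two_pos,
    ZMod.natCast_mod]

theorem interleaveSeq_natCast_two_mul_add_one :
    interleaveSeq n a b ((2 * i + 1 : ℕ) : ZMod (2 * n)) = b i := by
  have hodd : (2 * i + 1) % (2 * n) % 2 = 1 := by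
    rw [Nat.mod_mod_of_dvd _ (dvd_mul_right 2 n)]; omega
  have hdiv : (2 * i + 1) % (2 * n) / 2 = i % n := by
    rw [Nat.mod_mul_right_div_self, show (2 * i + 1) / 2 = i by omega]
  simp only [interleaveSeq]
  rw [ZMod.val_natCast, hodd, if_neg one_ne_zero, hdiv, ZMod.natCast_mod]

end interleave

theorem crossCorr_interleaveSeq (H n : ℕ) (a₀ a₁ b₀ b₁ : ZMod n → ZMod H) (τ : ℕ) :
    crossCorr H (2 * n) (interleaveSeq n a₀ a₁) (interleaveSeq n b₀ b₁)
        ((2 * τ : ℕ) : ZMod (2 * n)) =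
      crossCorr H n a₀ b₀ τ + crossCorr H n a₁ b₁ τ := by
  rw [crossCorr, sum_range_two_mul, crossCorr, crossCorr, ← Finset.sum_add_distrib]
  refine Finset.sum_congr rfl fun i _ ↦ ?_
  have heven : ((2 * i : ℕ) : ZMod (2 * n)) + (2 * τ : ℕ) = (2 * (i + τ) : ℕ) := by
    push_cast; ring
  have hodd : ((2 * i + 1 : ℕ) : ZMod (2 * n)) + (2 * τ : ℕ) = (2 * (i + τ) + 1 : ℕ) := by
    push_cast; ring
  rw [heven, hodd, interleaveSeq_natCast_two_mul, interleaveSeq_natCast_two_mul,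
    interleaveSeq_natCast_two_mul_add_one, interleaveSeq_natCast_two_mul_add_one, Nat.cast_add]

theorem stmt0_general (H n : ℕ)
    (a0 a1 b0 b1 : ZMod n → ZMod H) (g0 g1 f0 f1 : ZMod n)
    (u v : ZMod (2 * n) → ZMod H)
    (hu : u = interleaveSeq n (fun i => a0 (i + g0)) (fun i => a1 (i + g1)))
    (hv : v = interleaveSeq n (fun i => b0 (i + f0)) (fun i => b1 (i + f1)))
    (τ1 : ℕ) :
    crossCorr H (2 * n) u v ((2 * τ1 : ℕ) : ZMod (2 * n)) =
      crossCorr H n a0 b0 ((τ1 : ZMod n) + f0 - g0) +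
        crossCorr H n a1 b1 ((τ1 : ZMod n) + f1 - g1) := by
  rw [hu, hv, crossCorr_interleaveSeq, crossCorr_comp_add, crossCorr_comp_add]

theorem stmt0 (H n : ℕ) (hH : 2 ≤ H) (hn : Odd n)
    (a0 a1 b0 b1 : ZMod n → ZMod H) (g0 g1 f0 f1 : ZMod n)
    (u v : ZMod (2 * n) → ZMod H)
    (hu : u = interleaveSeq n (fun i => a0 (i + g0)) (fun i => a1 (i + g1)))
    (hv : v = interleaveSeq n (fun i => b0 (i + f0)) (fun i => b1 (i + f1)))
    (τ1 : ℕ) (hτ1 : τ1 < n) :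
    crossCorr H (2 * n) u v ((2 * τ1 : ℕ) : ZMod (2 * n)) =
      crossCorr H n a0 b0 ((τ1 : ZMod n) + f0 - g0) +
        crossCorr H n a1 b1 ((τ1 : ZMod n) + f1 - g1) :=
  stmt0_general H n a0 a1 b0 b1 g0 g1 f0 f1 u v hu hv τ1
end

section
/- (Krone–Sarwate) Let c, d be binary sequences of length N and let u be the quaternary sequence of length N defined by u(i) = φ^{−1}(c(i), d(i)). Then for every 0 ≤ τ < N, the auto-correlation of u satisfies R_u(τ) = (1/2)(R_c(τ) + R_d(τ)) + (ξ/2)(R_{c,d}(τ) − R_{d,c}(τ)), where ξ = √−1. -/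
/-!
It suffices to compare the summands, which depend only on the bits `c i, d i, c (i + τ),
d (i + τ)`. The Gray map is linear in the `±1` characters:
`i ^ φ⁻¹(a, b) = (1 + i)/2 · (-1)^a + (1 - i)/2 · (-1)^b`. Writing `i ^ (x - y) = i ^ x · conj (i ^ y)`
and expanding the product, the coefficients `|1 ± i|² / 4 = 1/2` and `(1 + i)/2 · conj ((1 - i)/2) = i/2`
produce exactly the four correlation terms.
-/

open Complex ComplexConjugate

lemma ZMod.pow_val_add_of_pow_eq_one {M : Type*} [Monoid M] {n : ℕ} [NeZero n] {ζ : M}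
    (hζ : ζ ^ n = 1) (x y : ZMod n) : ζ ^ (x + y).val = ζ ^ x.val * ζ ^ y.val := by
  rw [ZMod.val_add, ← pow_add]
  conv_rhs => rw [← Nat.mod_add_div (x.val + y.val) n, pow_add, pow_mul, hζ, one_pow, mul_one]

lemma Complex.pow_val_sub_of_pow_eq_one {n : ℕ} [NeZero n] {ζ : ℂ} (hζ : ζ ^ n = 1)
    (x y : ZMod n) :
    ζ ^ (x - y).val = ζ ^ x.val * conj (ζ ^ y.val) := by
  have hnorm : ‖ζ ^ y.val‖ = 1 := by
    rw [norm_pow, norm_eq_one_of_pow_eq_one hζ (NeZero.ne n), one_pow]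
  rw [← sub_add_cancel x y, ZMod.pow_val_add_of_pow_eq_one hζ, add_sub_cancel_right, mul_assoc,
    RCLike.mul_conj, hnorm]
  simp

lemma I_pow_val_grayInv (a b : ZMod 2) :
    I ^ (grayInv a b).val = (1 + I) / 2 * (-1) ^ a.val + (1 - I) / 2 * (-1) ^ b.val := by
  obtain rfl | rfl : a = 0 ∨ a = 1 := by revert a; decide
  all_goals obtain rfl | rfl : b = 0 ∨ b = 1 := by revert b; decide
  all_goals
    simp only [grayInv, if_pos, if_neg, one_ne_zero, not_false_eq_true, ZMod.val_zero,
      ZMod.val_one, show (1 : ZMod 4).val = 1 from rfl, show (2 : ZMod 4).val = 2 from rfl,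
      show (3 : ZMod 4).val = 3 from rfl, pow_succ, pow_zero, one_mul, I_mul_I]
    ring

lemma I_pow_val_grayInv_sub (a b a' b' : ZMod 2) :
    I ^ (grayInv a b - grayInv a' b').val =
      (1 / 2) * ((-1) ^ (a + a').val + (-1) ^ (b + b').val) +
        (I / 2) * ((-1) ^ (a + b').val - (-1) ^ (b + a').val) := by
  have hsign : ∀ c : ZMod 2, conj ((-1 : ℂ) ^ c.val) = (-1) ^ c.val := fun c => by simp
  have hneg : (-1 : ℂ) ^ 2 = 1 := by norm_num
  simp only [pow_val_sub_of_pow_eq_one I_pow_four, I_pow_val_grayInv,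
    ZMod.pow_val_add_of_pow_eq_one hneg, map_add, map_mul, map_div₀, map_sub, map_one, map_ofNat,
    conj_I, hsign]
  ring_nf
  rw [I_sq]
  ring

theorem stmt3 (N : ℕ) (c d : ZMod N → ZMod 2) (u : ZMod N → ZMod 4)
    (hu : ∀ i, u i = grayInv (c i) (d i)) (τ : ZMod N) :
    quadCorr N u u τ =
      (1 / 2) * ((binCorr N c c τ : ℂ) + (binCorr N d d τ : ℂ)) +
        (Complex.I / 2) * ((binCorr N c d τ : ℂ) - (binCorr N d c τ : ℂ)) := by
  simp only [quadCorr, binCorr, hu, Int.cast_sum, Int.cast_pow, Int.cast_neg, Int.cast_one,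
    Finset.mul_sum, ← Finset.sum_add_distrib, ← Finset.sum_sub_distrib]
  exact Finset.sum_congr rfl fun i _ => I_pow_val_grayInv_sub _ _ _ _
end

section
/- Let n = 4f+1 be an odd prime, let D_0, D_1, D_2, D_3 be the cyclotomic classes of order 4 with respect to a generator α of (Z/nZ)^*, and let s_1,…,s_6 be the six binary sequences of length n with support sets D_0∪D_1, D_0∪D_2, D_0∪D_3, D_1∪D_2, D_1∪D_3, D_2∪D_3. Then for all 1 ≤ i, j ≤ 6 and every k ∈ {0,1,2,3}, the cross-correlation R_{s_i,s_j} is constant on D_k: if τ_1, τ_2 ∈ D_k then R_{s_i,s_j}(τ_1) = R_{s_i,s_j}(τ_2). -/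
/-- The cyclotomic class `D_i` of order 4 w.r.t. the generator `α`. -/
def cycClass (n f : ℕ) (α : ZMod n) (i : ℕ) : Set (ZMod n) :=
  {x | ∃ t < f, x = α ^ (4 * t + i)}

/-- The cyclotomic number `(i, j)` of order 4: `|(D_i + 1) ∩ D_j|`. -/
noncomputable def cycNum (n f : ℕ) (α : ZMod n) (i j : ℕ) : ℕ :=
  Set.ncard {x : ZMod n | x - 1 ∈ cycClass n f α i ∧ x ∈ cycClass n f α j}

open Classical in
/-- The binary sequence of length `n` with support set `D_i ∪ D_j`. -/
noncomputable def cycSeq (n f : ℕ) (α : ZMod n) (i j : ℕ) : ZMod n → ZMod 2 :=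
  fun x => if x ∈ cycClass n f α i ∪ cycClass n f α j then 1 else 0

/-- Six binary sequences with supports `D₀∪D₁, D₀∪D₂, D₀∪D₃, D₁∪D₂, D₁∪D₃, D₂∪D₃`. -/
noncomputable def sixSeq (n f : ℕ) (α : ZMod n) : Fin 6 → ZMod n → ZMod 2
  | 0 => cycSeq n f α 0 1
  | 1 => cycSeq n f α 0 2
  | 2 => cycSeq n f α 0 3
  | 3 => cycSeq n f α 1 2
  | 4 => cycSeq n f α 1 3
  | 5 => cycSeq n f α 2 3

/-- 16 times the cyclotomic numbers of order 4 in the `f` odd case. -/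
def oddTable16 (n x y : ℤ) (i j : ℕ) : ℤ :=
  match i, j with
  | 0, 0 => n - 7 + 2*x
  | 0, 1 => n + 1 + 2*x - 8*y
  | 0, 2 => n + 1 - 6*x
  | 0, 3 => n + 1 + 2*x + 8*y
  | 1, 0 => n - 3 - 2*x
  | 1, 1 => n - 3 - 2*x
  | 1, 2 => n + 1 + 2*x + 8*y
  | 1, 3 => n + 1 + 2*x - 8*y
  | 2, 0 => n - 7 + 2*x
  | 2, 1 => n - 3 - 2*x
  | 2, 2 => n - 7 + 2*x
  | 2, 3 => n - 3 - 2*x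
  | 3, 0 => n - 3 - 2*x
  | 3, 1 => n + 1 + 2*x + 8*y
  | 3, 2 => n + 1 + 2*x - 8*y
  | 3, 3 => n - 3 - 2*x
  | _, _ => 0

/-- 16 times the cyclotomic numbers of order 4 in the `f` even case. -/
def evenTable16 (n x y : ℤ) (i j : ℕ) : ℤ :=
  match i, j with
  | 0, 0 => n - 11 - 6*x
  | 0, 1 => n - 3 + 2*x + 8*y
  | 0, 2 => n - 3 + 2*x
  | 0, 3 => n - 3 + 2*x - 8*y
  | 1, 0 => n - 3 + 2*x + 8*y
  | 1, 1 => n - 3 + 2*x - 8*y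
  | 1, 2 => n + 1 - 2*x
  | 1, 3 => n + 1 - 2*x
  | 2, 0 => n - 3 + 2*x
  | 2, 1 => n + 1 - 2*x
  | 2, 2 => n - 3 + 2*x
  | 2, 3 => n + 1 - 2*x
  | 3, 0 => n - 3 + 2*x - 8*y
  | 3, 1 => n + 1 - 2*x
  | 3, 2 => n + 1 - 2*x
  | 3, 3 => n - 3 + 2*x + 8*y
  | _, _ => 0

/-!
Every `D_i` is stable under multiplication by `α⁴`, since `α^(4f) = 1`; hence so are the six
sequences. Multiplying the summation index by the unit `α⁴` then shows
`R_{s,t}(α⁴ τ) = R_{s,t}(τ)`, and iterating gives `R_{s,t}(α^(4m+k)) = R_{s,t}(α^k)`.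
-/

section CyclotomicClass

variable {n f : ℕ} {α : ZMod n}

lemma pow_mem_cycClass (hord : α ^ (4 * f) = 1) (hf : 0 < f) (e l : ℕ) :
    α ^ (4 * e + l) ∈ cycClass n f α l := by
  refine ⟨e % f, Nat.mod_lt e hf, ?_⟩
  conv_lhs => rw [← Nat.mod_add_div e f]
  rw [show 4 * (e % f + f * (e / f)) + l = 4 * (e % f) + l + 4 * f * (e / f) by ring,
    pow_add, pow_mul, hord, one_pow, mul_one]

lemma pow_four_mul_mem_cycClass_iff (hord : α ^ (4 * f) = 1) {l : ℕ} {x : ZMod n} :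
    α ^ 4 * x ∈ cycClass n f α l ↔ x ∈ cycClass n f α l := by
  constructor
  · rintro ⟨t, ht, hx⟩
    have hx' : x = α ^ (4 * (f - 1 + t) + l) := by
      calc x = α ^ (4 * f) * x := by rw [hord, one_mul]
        _ = α ^ (4 * (f - 1)) * (α ^ 4 * x) := by
          rw [← mul_assoc, ← pow_add, show 4 * (f - 1) + 4 = 4 * f by omega]
        _ = α ^ (4 * (f - 1 + t) + l) := by rw [hx, ← pow_add]; ring_nf
    exact hx' ▸ pow_mem_cycClass hord (by omega) _ l
  · rintro ⟨t, ht, rfl⟩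
    rw [← pow_add, show 4 + (4 * t + l) = 4 * (t + 1) + l by ring]
    exact pow_mem_cycClass hord (by omega) _ l

lemma cycSeq_pow_four_mul (hord : α ^ (4 * f) = 1) (a b : ℕ) (x : ZMod n) :
    cycSeq n f α a b (α ^ 4 * x) = cycSeq n f α a b x := by
  classical
  exact if_congr (by rw [Set.mem_union, Set.mem_union, pow_four_mul_mem_cycClass_iff hord,
    pow_four_mul_mem_cycClass_iff hord]) rfl rfl

lemma sixSeq_pow_four_mul (hord : α ^ (4 * f) = 1) (i : Fin 6) (x : ZMod n) :
    sixSeq n f α i (α ^ 4 * x) = sixSeq n f α i x := by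
  fin_cases i <;> exact cycSeq_pow_four_mul hord _ _ x

end CyclotomicClass

section Correlation

variable {N : ℕ} [NeZero N] {s t : ZMod N → ZMod 2} {c : ZMod N}

lemma binCorr_eq_sum_univ (s t : ZMod N → ZMod 2) (τ : ZMod N) :
    binCorr N s t τ = ∑ x : ZMod N, (-1 : ℤ) ^ (s x + t (x + τ)).val := by
  refine Finset.sum_nbij' (fun i => (i : ZMod N)) ZMod.val (by simp)
    (fun x _ => Finset.mem_range.mpr (ZMod.val_lt x)) (fun i hi => ?_)
    (fun x _ => ZMod.natCast_zmod_val x) (fun _ _ => rfl)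
  exact ZMod.val_natCast_of_lt (Finset.mem_range.mp hi)

lemma binCorr_mul_left (hc : IsUnit c) (hs : ∀ x, s (c * x) = s x) (ht : ∀ x, t (c * x) = t x)
    (τ : ZMod N) : binCorr N s t (c * τ) = binCorr N s t τ := by
  rw [binCorr_eq_sum_univ, binCorr_eq_sum_univ]
  refine (Fintype.sum_bijective _ (IsUnit.isUnit_iff_mulLeft_bijective.mp hc) _ _ fun x => ?_).symm
  rw [← mul_add, hs, ht]

lemma binCorr_pow_mul_left (hc : IsUnit c) (hs : ∀ x, s (c * x) = s x)
    (ht : ∀ x, t (c * x) = t x) (m : ℕ) (τ : ZMod N) :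
    binCorr N s t (c ^ m * τ) = binCorr N s t τ := by
  induction m with
  | zero => rw [pow_zero, one_mul]
  | succ m ih => rw [pow_succ', mul_assoc, binCorr_mul_left hc hs ht, ih]

end Correlation

theorem stmt14 (n f : ℕ) (hp : n.Prime) (hnf : n = 4 * f + 1)
    (α : ZMod n) (hα : ∀ z : ZMod n, z ≠ 0 → ∃ k : ℕ, z = α ^ k) :
    ∀ i j : Fin 6, ∀ k < 4, ∀ τ1 ∈ cycClass n f α k, ∀ τ2 ∈ cycClass n f α k,
      binCorr n (sixSeq n f α i) (sixSeq n f α j) τ1 =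
        binCorr n (sixSeq n f α i) (sixSeq n f α j) τ2 := by
  intro i j k _ τ1 hτ1 τ2 hτ2
  have : Fact n.Prime := ⟨hp⟩
  have : Fact (2 < n) := ⟨by have := hp.two_le; omega⟩
  have hα0 : α ≠ 0 := by
    rintro rfl
    obtain ⟨_ | k, hk⟩ := hα (-1) (neg_ne_zero.mpr one_ne_zero)
    · exact ZMod.neg_one_ne_one (by simpa using hk)
    · simp at hk
  have hord : α ^ (4 * f) = 1 := by
    simpa [hnf] using ZMod.pow_card_sub_one_eq_one hα0
  have hcorr : ∀ τ ∈ cycClass n f α k,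
      binCorr n (sixSeq n f α i) (sixSeq n f α j) τ =
        binCorr n (sixSeq n f α i) (sixSeq n f α j) (α ^ k) := by
    rintro _ ⟨t, -, rfl⟩
    rw [pow_add, pow_mul, binCorr_pow_mul_left (hα0.isUnit.pow 4)
      (sixSeq_pow_four_mul hord i) (sixSeq_pow_four_mul hord j)]
  rw [hcorr τ1 hτ1, hcorr τ2 hτ2]
end
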